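/- Weak law of large numbers for convolutionary random vectors (bounded Lipschitz test functions): let {X_i} be a convolutionary sequence of identically distributed d-dimensional random vectors on (Ω,H,𝔼) with 𝔼[|X₁|²] < ∞, and suppose there exists an independent sequence {X̂_i} on (Ω̂,Ĥ,Ê) with X̂_i identically distributed as X_i such that the weak law of large numbers holds for {X̂_i} (Peng's theorem): lim_n Ê[φ(Ŝ_n/n)] = Ê[φ(η̂)] for the maximal distribution η̂ with generator G(p)=Ê[⟨p,X̂₁⟩]. Then for any maximal distributed η on (Ω,H,𝔼) with generator G(p)=𝔼[⟨p,X₁⟩] and any bounded Lipschitz φ, lim_{n→∞} 𝔼[φ(S_n/n)] = 𝔼[φ(η)], where S_n = ∑_{i=1}^n X_i. -/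

import Mathlib

/-! For bounded Lipschitz `φ` and `n ≥ 1`, `𝔼[φ(Sₙ)] = Ê[φ(Ŝₙ)]`, by induction on `n`: the
convolution property of `{Xᵢ}` and the independence of `{X̂ᵢ}` reduce the two sides to
`𝔼[ψ(Sₙ₋₁)]` and `Ê[ψ(Ŝₙ₋₁)]` with the same kernel `ψ(x) = Ê[φ(x + X̂₁)]`, which is again bounded
Lipschitz because a sublinear expectation is `1`-Lipschitz for the sup distance. Applied to
`x ↦ φ(x / n)`, this transfers Peng's law from `{X̂ᵢ}` to `{Xᵢ}`. Finally `η` and `η̂` have the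
same generator, and a bounded closed convex set is determined by its support function
(Hahn–Banach), so `Γ = Γ̂` and `𝔼[φ(η)] = Ê[φ(η̂)]`. -/

open Filter Topology

/-- Locally Lipschitz test functions of class `C_{l,Lip}`. -/
def LocLip {V : Type*} [NormedAddCommGroup V] (φ : V → ℝ) : Prop :=
  ∃ C > (0 : ℝ), ∃ m : ℕ, ∀ x y : V, |φ x - φ y| ≤ C * (1 + ‖x‖ ^ m + ‖y‖ ^ m) * ‖x - y‖

/-- Bounded Lipschitz test functions of class `C_{b,Lip}`. -/
def BddLip {V : Type*} [NormedAddCommGroup V] (φ : V → ℝ) : Prop :=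
  (∃ M : ℝ, ∀ x, |φ x| ≤ M) ∧ ∃ C : ℝ, ∀ x y : V, |φ x - φ y| ≤ C * ‖x - y‖


lemma LocLip.of_lipschitzWith {V : Type*} [NormedAddCommGroup V] {φ : V → ℝ} {K : NNReal}
    (hφ : LipschitzWith K φ) : LocLip φ := by
  refine ⟨K + 1, by positivity, 0, fun x y => ?_⟩
  have h := hφ.dist_le_mul x y
  rw [Real.dist_eq, dist_eq_norm] at h
  simp only [pow_zero]
  nlinarith [norm_nonneg (x - y)]

lemma BddLip.of_lipschitzWith {V : Type*} [NormedAddCommGroup V] {φ : V → ℝ} {K : NNReal}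
    (hbdd : ∃ M : ℝ, ∀ x, |φ x| ≤ M) (hφ : LipschitzWith K φ) : BddLip φ :=
  ⟨hbdd, K, fun x y => by simpa [Real.dist_eq, dist_eq_norm] using hφ.dist_le_mul x y⟩

lemma BddLip.exists_lipschitzWith {V : Type*} [NormedAddCommGroup V] {φ : V → ℝ}
    (hφ : BddLip φ) : ∃ K, LipschitzWith K φ := by
  obtain ⟨-, C, hC⟩ := hφ
  refine ⟨C.toNNReal, .of_dist_le_mul fun x y => ?_⟩
  rw [Real.dist_eq, dist_eq_norm]
  exact (hC x y).trans (by gcongr; exact C.le_coe_toNNReal)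

lemma BddLip.locLip {V : Type*} [NormedAddCommGroup V] {φ : V → ℝ} (hφ : BddLip φ) :
    LocLip φ :=
  let ⟨_, hK⟩ := hφ.exists_lipschitzWith
  .of_lipschitzWith hK

lemma BddLip.comp_lipschitzWith {V W : Type*} [NormedAddCommGroup V] [NormedAddCommGroup W]
    {φ : V → ℝ} {g : W → V} {K : NNReal} (hφ : BddLip φ) (hg : LipschitzWith K g) :
    BddLip (φ ∘ g) := by
  obtain ⟨_, hK⟩ := hφ.exists_lipschitzWith
  obtain ⟨M, hM⟩ := hφ.1
  exact .of_lipschitzWith ⟨M, fun x => hM (g x)⟩ (hK.comp hg)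

lemma BddLip.comp_add_left {V : Type*} [NormedAddCommGroup V] {φ : V → ℝ} (hφ : BddLip φ)
    (x : V) : BddLip fun z => φ (x + z) :=
  hφ.comp_lipschitzWith (isometry_add_left x).lipschitz

/-- A sublinear expectation without the positive homogeneity axiom. -/
structure IsSubadditiveExpectation {Ω : Type*} (E : (Ω → ℝ) → ℝ) : Prop where
  mono : ∀ f g : Ω → ℝ, f ≤ g → E f ≤ E g
  const : ∀ c : ℝ, E (fun _ => c) = c
  subadd : ∀ f g : Ω → ℝ, E (f + g) ≤ E f + E g

namespace IsSubadditiveExpectation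

variable {Ω : Type*} {E : (Ω → ℝ) → ℝ}

lemma le_add_of_sub_le (hE : IsSubadditiveExpectation E) {f g : Ω → ℝ} {c : ℝ}
    (h : ∀ ω, f ω - g ω ≤ c) : E f ≤ E g + c :=
  calc E f = E (g + (f - g)) := by rw [add_sub_cancel]
    _ ≤ E g + E (f - g) := hE.subadd g (f - g)
    _ ≤ E g + c := by grw [hE.mono (f - g) (fun _ => c) h, hE.const]

lemma abs_sub_le (hE : IsSubadditiveExpectation E) {f g : Ω → ℝ} {c : ℝ}
    (h : ∀ ω, |f ω - g ω| ≤ c) : |E f - E g| ≤ c := by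
  have hfg : E f ≤ E g + c := hE.le_add_of_sub_le fun ω => (abs_sub_le_iff.1 (h ω)).1
  have hgf : E g ≤ E f + c := hE.le_add_of_sub_le fun ω => (abs_sub_le_iff.1 (h ω)).2
  exact abs_sub_le_iff.2 ⟨by linarith, by linarith⟩

lemma bddLip_comp_add_right {V : Type*} [NormedAddCommGroup V] (hE : IsSubadditiveExpectation E)
    {φ : V → ℝ} (hφ : BddLip φ) (Y : Ω → V) : BddLip fun x => E fun ω => φ (x + Y ω) := by
  obtain ⟨⟨M, hM⟩, C, hC⟩ := hφ
  refine ⟨⟨M, fun x => ?_⟩, C, fun x y => ?_⟩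
  · simpa [hE.const] using hE.abs_sub_le (g := fun _ => 0) fun ω => by simpa using hM _
  · exact hE.abs_sub_le fun ω => by simpa using hC (x + Y ω) (y + Y ω)

end IsSubadditiveExpectation

section SupportFunction

variable {V : Type*} [NormedAddCommGroup V] [NormedSpace ℝ V]

lemma subset_of_forall_sSup_image_le {Γ Γ' : Set V} (hΓ : Bornology.IsBounded Γ)
    (hne' : Γ'.Nonempty) (hcl' : IsClosed Γ') (hcv' : Convex ℝ Γ')
    (h : ∀ f : StrongDual ℝ V, sSup (f '' Γ) ≤ sSup (f '' Γ')) : Γ ⊆ Γ' := by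
  intro x hx
  by_contra hx'
  obtain ⟨f, u, hfΓ', hux⟩ := geometric_hahn_banach_closed_point hcv' hcl' hx'
  obtain ⟨R, hR⟩ := hΓ.exists_norm_le
  have hbdd : BddAbove (f '' Γ) := ⟨‖f‖ * R, by
    rintro _ ⟨a, ha, rfl⟩
    exact (le_abs_self _).trans ((f.le_opNorm a).trans (by gcongr; exact hR a ha))⟩
  have hΓ'u : sSup (f '' Γ') ≤ u := csSup_le (hne'.image f) (by
    rintro _ ⟨a, ha, rfl⟩
    exact (hfΓ' a ha).le)
  have hfx : f x ≤ sSup (f '' Γ) := le_csSup hbdd ⟨x, hx, rfl⟩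
  linarith [h f]

lemma eq_of_forall_sSup_image_eq {Γ Γ' : Set V}
    (hΓ : Γ.Nonempty ∧ Bornology.IsBounded Γ ∧ IsClosed Γ ∧ Convex ℝ Γ)
    (hΓ' : Γ'.Nonempty ∧ Bornology.IsBounded Γ' ∧ IsClosed Γ' ∧ Convex ℝ Γ')
    (h : ∀ f : StrongDual ℝ V, sSup (f '' Γ) = sSup (f '' Γ')) : Γ = Γ' :=
  (subset_of_forall_sSup_image_le hΓ.2.1 hΓ'.1 hΓ'.2.2.1 hΓ'.2.2.2 fun f => (h f).le).antisymm
    (subset_of_forall_sSup_image_le hΓ'.2.1 hΓ.1 hΓ.2.2.1 hΓ.2.2.2 fun f => (h f).ge)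

end SupportFunction

lemma StrongDual.apply_eq_sum_mul {d : ℕ} (f : StrongDual ℝ (Fin d → ℝ)) (x : Fin d → ℝ) :
    f x = ∑ j, f (Pi.single j 1) * x j := by
  rw [← f.coe_coe, LinearMap.pi_apply_eq_sum_univ]
  refine Finset.sum_congr rfl fun j _ => ?_
  rw [smul_eq_mul, mul_comm]
  congr
  ext k
  simp [Pi.single_apply, eq_comm]

lemma Fin.sum_univ_add_one_eq_sum_Icc {M : Type*} [AddCommMonoid M] (n : ℕ) (g : ℕ → M) :
    ∑ j : Fin n, g (j + 1) = ∑ i ∈ Finset.Icc 1 n, g i := by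
  rw [Fin.sum_univ_eq_sum_range (fun j => g (j + 1)), Finset.range_eq_Ico, Finset.sum_Ico_add',
    zero_add, Finset.Ico_add_one_right_eq_Icc]

lemma BddLip.locLip_comp_sum_add {V : Type*} [NormedAddCommGroup V] [NormedSpace ℝ V]
    {φ : V → ℝ} (hφ : BddLip φ) (n : ℕ) :
    LocLip fun q : (Fin n → V) × V => φ ((∑ j, q.1 j) + q.2) := by
  let L : (Fin n → V) × V →L[ℝ] V :=
    (∑ j, ContinuousLinearMap.proj j).coprod (ContinuousLinearMap.id ℝ V)
  have hL : ∀ q, L q = (∑ j, q.1 j) + q.2 := fun q => by simp [L, sum_apply]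
  simpa [Function.comp_def, hL] using (hφ.comp_lipschitzWith L.lipschitz).locLip

section Comparison

variable {Ω Ωh V : Type*} [NormedAddCommGroup V]

def IsConvolutionary (E : (Ω → ℝ) → ℝ) (X : ℕ → Ω → V) : Prop :=
  ∀ n k : ℕ, 1 ≤ k → k ≤ n → ∀ φ : V → ℝ, LocLip φ →
    E (fun ω => φ ((∑ i ∈ Finset.Icc k n, X i ω) + X (n + 1) ω)) =
      E (fun ω => E (fun ω' => φ ((∑ i ∈ Finset.Icc k n, X i ω) + X (n + 1) ω')))

def IsIndependentSeq (E : (Ω → ℝ) → ℝ) (X : ℕ → Ω → V) : Prop :=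
  ∀ n : ℕ, 1 ≤ n → ∀ φ : (Fin n → V) × V → ℝ, LocLip φ →
    E (fun ω => φ (fun j => X (j + 1) ω, X (n + 1) ω)) =
      E (fun ω => E (fun ω' => φ (fun j => X (j + 1) ω, X (n + 1) ω')))

def SameDistrib (E : (Ω → ℝ) → ℝ) (Y : Ω → V) (E' : (Ωh → ℝ) → ℝ) (Y' : Ωh → V) : Prop :=
  ∀ φ : V → ℝ, LocLip φ → E (fun ω => φ (Y ω)) = E' (fun ω => φ (Y' ω))

variable {E : (Ω → ℝ) → ℝ} {Eh : (Ωh → ℝ) → ℝ} {X : ℕ → Ω → V} {Xh : ℕ → Ωh → V}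

lemma IsConvolutionary.expectation_sum_Icc_succ (hconv : IsConvolutionary E X)
    (hid : ∀ i, 1 ≤ i → SameDistrib E (X i) E (X 1))
    (hidh : ∀ i, 1 ≤ i → SameDistrib Eh (Xh i) E (X i))
    {n : ℕ} (hn : 1 ≤ n) {φ : V → ℝ} (hφ : BddLip φ) :
    E (fun ω => φ (∑ i ∈ Finset.Icc 1 (n + 1), X i ω)) =
      E (fun ω => Eh fun ω' => φ ((∑ i ∈ Finset.Icc 1 n, X i ω) + Xh 1 ω')) := by
  simp_rw [Finset.sum_Icc_succ_top (Nat.le_add_left 1 n)]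
  rw [hconv n 1 le_rfl hn φ hφ.locLip]
  congr 1
  funext ω
  have hx := (hφ.comp_add_left (∑ i ∈ Finset.Icc 1 n, X i ω)).locLip
  rw [hid (n + 1) (Nat.le_add_left 1 n) _ hx, ← hidh 1 le_rfl _ hx]

lemma IsIndependentSeq.expectation_sum_Icc_succ [NormedSpace ℝ V]
    (hindep : IsIndependentSeq Eh Xh)
    (hid : ∀ i, 1 ≤ i → SameDistrib E (X i) E (X 1))
    (hidh : ∀ i, 1 ≤ i → SameDistrib Eh (Xh i) E (X i))
    {n : ℕ} (hn : 1 ≤ n) {φ : V → ℝ} (hφ : BddLip φ) :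
    Eh (fun ω => φ (∑ i ∈ Finset.Icc 1 (n + 1), Xh i ω)) =
      Eh (fun ω => Eh fun ω' => φ ((∑ i ∈ Finset.Icc 1 n, Xh i ω) + Xh 1 ω')) := by
  have hsum (ω : Ωh) : ∑ j : Fin n, Xh (j + 1) ω = ∑ i ∈ Finset.Icc 1 n, Xh i ω :=
    Fin.sum_univ_add_one_eq_sum_Icc n (Xh · ω)
  have h := hindep n hn _ (hφ.locLip_comp_sum_add n)
  simp only [hsum] at h
  simp_rw [Finset.sum_Icc_succ_top (Nat.le_add_left 1 n), h]
  congr 1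
  funext ω
  have hx := (hφ.comp_add_left (∑ i ∈ Finset.Icc 1 n, Xh i ω)).locLip
  rw [hidh (n + 1) (Nat.le_add_left 1 n) _ hx, hid (n + 1) (Nat.le_add_left 1 n) _ hx,
    ← hidh 1 le_rfl _ hx]

lemma expectation_partial_sum_eq_of_independent_copy [NormedSpace ℝ V]
    (hEh : IsSubadditiveExpectation Eh)
    (hconv : IsConvolutionary E X) (hid : ∀ i, 1 ≤ i → SameDistrib E (X i) E (X 1))
    (hindep : IsIndependentSeq Eh Xh) (hidh : ∀ i, 1 ≤ i → SameDistrib Eh (Xh i) E (X i))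
    {n : ℕ} (hn : 1 ≤ n) {φ : V → ℝ} (hφ : BddLip φ) :
    E (fun ω => φ (∑ i ∈ Finset.Icc 1 n, X i ω)) =
      Eh (fun ω => φ (∑ i ∈ Finset.Icc 1 n, Xh i ω)) := by
  induction n, hn using Nat.le_induction generalizing φ with
  | base => simpa using (hidh 1 le_rfl φ hφ.locLip).symm
  | succ n hn ih =>
    rw [hconv.expectation_sum_Icc_succ hid hidh hn hφ,
      hindep.expectation_sum_Icc_succ hid hidh hn hφ]
    exact ih (hEh.bddLip_comp_add_right hφ (Xh 1))

end Comparison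

theorem weak_lln_convolutionary_general
    {Ω Ωh : Type*} {d : ℕ}
    (E : (Ω → ℝ) → ℝ) (Eh : (Ωh → ℝ) → ℝ)
    (hmonoh : ∀ f g : Ωh → ℝ, f ≤ g → Eh f ≤ Eh g)
    (hconsth : ∀ c : ℝ, Eh (fun _ => c) = c)
    (hsubaddh : ∀ f g : Ωh → ℝ, Eh (f + g) ≤ Eh f + Eh g)
    (X : ℕ → Ω → Fin d → ℝ)
    -- `{Xᵢ}` is a convolutionary sequence
    (hconv : ∀ n k : ℕ, 1 ≤ k → k ≤ n → ∀ φ : (Fin d → ℝ) → ℝ, LocLip φ →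
      E (fun ω => φ ((∑ i ∈ Finset.Icc k n, X i ω) + X (n + 1) ω)) =
        E (fun ω => E (fun ω' => φ ((∑ i ∈ Finset.Icc k n, X i ω) + X (n + 1) ω'))))
    -- the `Xᵢ` are identically distributed
    (hid : ∀ i : ℕ, 1 ≤ i → ∀ φ : (Fin d → ℝ) → ℝ, LocLip φ →
      E (fun ω => φ (X i ω)) = E (fun ω => φ (X 1 ω)))
    (Xh : ℕ → Ωh → Fin d → ℝ)
    -- `{X̂ᵢ}` is an independent sequence
    (hindep : ∀ n : ℕ, 1 ≤ n → ∀ φ : (Fin n → Fin d → ℝ) × (Fin d → ℝ) → ℝ, LocLip φ →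
      Eh (fun ω => φ (fun j => Xh (j + 1) ω, Xh (n + 1) ω)) =
        Eh (fun ω => Eh (fun ω' => φ (fun j => Xh (j + 1) ω, Xh (n + 1) ω'))))
    -- `X̂ᵢ` identically distributed as `Xᵢ`
    (hidh : ∀ i : ℕ, 1 ≤ i → ∀ φ : (Fin d → ℝ) → ℝ, LocLip φ →
      Eh (fun ω => φ (Xh i ω)) = E (fun ω => φ (X i ω)))
    -- `η̂` is maximal distributed with generator `Ĝ(p) = Ê[⟨p, X̂₁⟩]`
    (ηh : Ωh → Fin d → ℝ) (Γh : Set (Fin d → ℝ))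
    (hΓh : Γh.Nonempty ∧ Bornology.IsBounded Γh ∧ IsClosed Γh ∧ Convex ℝ Γh)
    (hmaxh : ∀ φ : (Fin d → ℝ) → ℝ, LocLip φ →
      Eh (fun ω => φ (ηh ω)) = sSup (φ '' Γh))
    (hgenh : ∀ p : Fin d → ℝ,
      sSup ((fun x => ∑ j, p j * x j) '' Γh) = Eh (fun ω => ∑ j, p j * Xh 1 ω j))
    -- Peng's weak law of large numbers holds for `{X̂ᵢ}`
    (hLLN : ∀ φ : (Fin d → ℝ) → ℝ, BddLip φ →
      Tendsto (fun n : ℕ =>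
          Eh (fun ω => φ ((n : ℝ)⁻¹ • ∑ i ∈ Finset.Icc 1 n, Xh i ω)))
        atTop (𝓝 (Eh (fun ω => φ (ηh ω)))))
    -- `η` is maximal distributed on `(Ω, H, 𝔼)` with generator `G(p) = 𝔼[⟨p, X₁⟩]`
    (η : Ω → Fin d → ℝ) (Γ : Set (Fin d → ℝ))
    (hΓ : Γ.Nonempty ∧ Bornology.IsBounded Γ ∧ IsClosed Γ ∧ Convex ℝ Γ)
    (hmax : ∀ φ : (Fin d → ℝ) → ℝ, LocLip φ →
      E (fun ω => φ (η ω)) = sSup (φ '' Γ))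
    (hgen : ∀ p : Fin d → ℝ,
      sSup ((fun x => ∑ j, p j * x j) '' Γ) = E (fun ω => ∑ j, p j * X 1 ω j)) :
    ∀ φ : (Fin d → ℝ) → ℝ, BddLip φ →
      Tendsto (fun n : ℕ =>
          E (fun ω => φ ((n : ℝ)⁻¹ • ∑ i ∈ Finset.Icc 1 n, X i ω)))
        atTop (𝓝 (E (fun ω => φ (η ω)))) := by
  intro φ hφ
  have hΓ_eq : Γ = Γh := eq_of_forall_sSup_image_eq hΓ hΓh fun f => by
    have hf : ⇑f = fun x => ∑ j, f (Pi.single j 1) * x j := funext f.apply_eq_sum_mul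
    have hf_loc : LocLip fun x : Fin d → ℝ => ∑ j, f (Pi.single j 1) * x j :=
      hf ▸ .of_lipschitzWith f.lipschitz
    rw [hf, hgen, hgenh, hidh 1 le_rfl _ hf_loc]
  have hlim : Eh (fun ω => φ (ηh ω)) = E (fun ω => φ (η ω)) := by
    rw [hmaxh φ hφ.locLip, hmax φ hφ.locLip, hΓ_eq]
  rw [← hlim]
  refine (hLLN φ hφ).congr' ?_
  filter_upwards [eventually_ge_atTop 1] with n hn
  exact (expectation_partial_sum_eq_of_independent_copy ⟨hmonoh, hconsth, hsubaddh⟩ hconv hid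
    hindep hidh hn (hφ.comp_lipschitzWith (lipschitzWith_smul (n : ℝ)⁻¹))).symm

/-- Weak law of large numbers for a convolutionary sequence of identically distributed
random vectors (bounded Lipschitz test functions): via the comparison with an
independent copy sequence satisfying Peng's weak LLN,
`lim_n 𝔼[φ(Sₙ/n)] = 𝔼[φ(η)]` for the maximal distribution `η` with generator
`G(p) = 𝔼[⟨p, X₁⟩]`. -/
theorem weak_lln_convolutionary
    {Ω Ωh : Type*} {d : ℕ}
    (E : (Ω → ℝ) → ℝ) (Eh : (Ωh → ℝ) → ℝ)
    (hmono : ∀ f g : Ω → ℝ, f ≤ g → E f ≤ E g)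
    (hconst : ∀ c : ℝ, E (fun _ => c) = c)
    (hsubadd : ∀ f g : Ω → ℝ, E (f + g) ≤ E f + E g)
    (hpos : ∀ l : ℝ, 0 ≤ l → ∀ f : Ω → ℝ, E (l • f) = l * E f)
    (hmonoh : ∀ f g : Ωh → ℝ, f ≤ g → Eh f ≤ Eh g)
    (hconsth : ∀ c : ℝ, Eh (fun _ => c) = c)
    (hsubaddh : ∀ f g : Ωh → ℝ, Eh (f + g) ≤ Eh f + Eh g)
    (hposh : ∀ l : ℝ, 0 ≤ l → ∀ f : Ωh → ℝ, Eh (l • f) = l * Eh f)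
    (X : ℕ → Ω → Fin d → ℝ)
    -- `{Xᵢ}` is a convolutionary sequence
    (hconv : ∀ n k : ℕ, 1 ≤ k → k ≤ n → ∀ φ : (Fin d → ℝ) → ℝ, LocLip φ →
      E (fun ω => φ ((∑ i ∈ Finset.Icc k n, X i ω) + X (n + 1) ω)) =
        E (fun ω => E (fun ω' => φ ((∑ i ∈ Finset.Icc k n, X i ω) + X (n + 1) ω'))))
    -- the `Xᵢ` are identically distributed
    (hid : ∀ i : ℕ, 1 ≤ i → ∀ φ : (Fin d → ℝ) → ℝ, LocLip φ →
      E (fun ω => φ (X i ω)) = E (fun ω => φ (X 1 ω)))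
    -- finite second moment `𝔼[|X₁|²] < ∞`
    (hmom2 : ∃ M : ℝ, E (fun ω => ‖X 1 ω‖ ^ 2) ≤ M)
    (Xh : ℕ → Ωh → Fin d → ℝ)
    -- `{X̂ᵢ}` is an independent sequence
    (hindep : ∀ n : ℕ, 1 ≤ n → ∀ φ : (Fin n → Fin d → ℝ) × (Fin d → ℝ) → ℝ, LocLip φ →
      Eh (fun ω => φ (fun j => Xh (j + 1) ω, Xh (n + 1) ω)) =
        Eh (fun ω => Eh (fun ω' => φ (fun j => Xh (j + 1) ω, Xh (n + 1) ω'))))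
    -- `X̂ᵢ` identically distributed as `Xᵢ`
    (hidh : ∀ i : ℕ, 1 ≤ i → ∀ φ : (Fin d → ℝ) → ℝ, LocLip φ →
      Eh (fun ω => φ (Xh i ω)) = E (fun ω => φ (X i ω)))
    -- `η̂` is maximal distributed with generator `Ĝ(p) = Ê[⟨p, X̂₁⟩]`
    (ηh : Ωh → Fin d → ℝ) (Γh : Set (Fin d → ℝ))
    (hΓh : Γh.Nonempty ∧ Bornology.IsBounded Γh ∧ IsClosed Γh ∧ Convex ℝ Γh)
    (hmaxh : ∀ φ : (Fin d → ℝ) → ℝ, LocLip φ →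
      Eh (fun ω => φ (ηh ω)) = sSup (φ '' Γh))
    (hgenh : ∀ p : Fin d → ℝ,
      sSup ((fun x => ∑ j, p j * x j) '' Γh) = Eh (fun ω => ∑ j, p j * Xh 1 ω j))
    -- Peng's weak law of large numbers holds for `{X̂ᵢ}`
    (hLLN : ∀ φ : (Fin d → ℝ) → ℝ, BddLip φ →
      Tendsto (fun n : ℕ =>
          Eh (fun ω => φ ((n : ℝ)⁻¹ • ∑ i ∈ Finset.Icc 1 n, Xh i ω)))
        atTop (𝓝 (Eh (fun ω => φ (ηh ω)))))
    -- `η` is maximal distributed on `(Ω, H, 𝔼)` with generator `G(p) = 𝔼[⟨p, X₁⟩]`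
    (η : Ω → Fin d → ℝ) (Γ : Set (Fin d → ℝ))
    (hΓ : Γ.Nonempty ∧ Bornology.IsBounded Γ ∧ IsClosed Γ ∧ Convex ℝ Γ)
    (hmax : ∀ φ : (Fin d → ℝ) → ℝ, LocLip φ →
      E (fun ω => φ (η ω)) = sSup (φ '' Γ))
    (hgen : ∀ p : Fin d → ℝ,
      sSup ((fun x => ∑ j, p j * x j) '' Γ) = E (fun ω => ∑ j, p j * X 1 ω j)) :
    ∀ φ : (Fin d → ℝ) → ℝ, BddLip φ →
      Tendsto (fun n : ℕ =>
          E (fun ω => φ ((n : ℝ)⁻¹ • ∑ i ∈ Finset.Icc 1 n, X i ω)))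
        atTop (𝓝 (E (fun ω => φ (η ω)))) :=
  weak_lln_convolutionary_general E Eh hmonoh hconsth hsubaddh X hconv hid Xh hindep hidh ηh Γh hΓh
    hmaxh hgenh hLLN η Γ hΓ hmax hgen
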